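/- arXiv:0810.1936 — 6 statements merged into one kernel-verified Lean document; each statement's English description precedes it below -/
import Mathlib

section
/- Let n ≥ 3, let P be a free ℤ-module of rank n − 2 with a symmetric ℤ-bilinear form ⟨·,·⟩, and let A : ZMod n → P be a family satisfying conditions (i) and (ii) of an abstract toric system. Then for every i ∈ ZMod n, the family of n − 2 elements (A_j)_{j ∈ ZMod n, j ∉ {i, i+1}} is a ℤ-basis of P. -/
/-!
Order the indices `j ≠ i, i + 1` by `(j - i).val`. The functionals `B (A (j - 1))` pair with the
vectors `A k` through a triangular matrix with ones on the diagonal, since `A (j - 1)` is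
orthogonal to every `A k` lying further from `i` than `j`. Hence the map `ℤ^{n-2} → P`,
`c ↦ ∑ c k • A k`, composed with the map `P → ℤ^{n-2}` given by these functionals is bijective.
The second map is then a surjection between free modules of the same finite rank, so it is
bijective, and therefore so is the first one.
-/

open Module

theorem Matrix.BlockTriangular.det_eq_prod_diag {m α R : Type*} [Fintype m] [DecidableEq m]
    [CommRing R] [LinearOrder α] {M : Matrix m m R} {b : m → α} (hM : M.BlockTriangular b)
    (hb : Function.Injective b) : M.det = ∏ i, M i i := by
  let := LinearOrder.lift' b hb
  exact Matrix.det_of_isUpperTriangular hM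

namespace ZMod

variable {n : ℕ} [NeZero n]

theorem two_le_val_sub {i j : ZMod n} (h₀ : j ≠ i) (h₁ : j ≠ i + 1) : 2 ≤ (j - i).val := by
  by_contra! h
  interval_cases hv : (j - i).val
  · exact h₀ (sub_eq_zero.1 ((ZMod.val_eq_zero _).1 hv))
  · refine h₁ (sub_eq_iff_eq_add'.1 ?_)
    rw [← ZMod.natCast_zmod_val (j - i), hv, Nat.cast_one]

theorem ne_sub_natCast_of_val_sub_lt {i j k : ZMod n} {d : ℕ} (hd : d ≤ (j - i).val)
    (h : (j - i).val < (k - i).val) : k ≠ j - d := by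
  rintro rfl
  have hval : (d : ZMod n).val ≤ (j - i).val := by
    rw [ZMod.val_natCast]; exact (Nat.mod_le d n).trans hd
  rw [show j - d - i = j - i - d by ring, ZMod.val_sub hval] at h
  omega

theorem sub_two_le_card_ne_and_ne_add_one (i : ZMod n) :
    n - 2 ≤ Fintype.card {j : ZMod n // j ≠ i ∧ j ≠ i + 1} := by
  classical
  calc n - 2 ≤ n - ({i, i + 1} : Finset (ZMod n)).card := Nat.sub_le_sub_left Finset.card_le_two n
    _ = ({i, i + 1}ᶜ : Finset (ZMod n)).card := by rw [Finset.card_compl, ZMod.card]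
    _ = _ := by
      rw [Fintype.card_subtype]
      congr 1
      ext j
      simp

end ZMod

theorem Module.Basis.exists_coe_eq_of_isUnit_det_pairing {ι R M : Type*} [Fintype ι]
    [DecidableEq ι] [CommRing R] [Nontrivial R] [AddCommGroup M] [Module R M] [Module.Free R M]
    [Module.Finite R M] (v : ι → M) (φ : ι → M →ₗ[R] R)
    (hdet : IsUnit (Matrix.of fun j k => φ j (v k)).det)
    (hrank : finrank R M ≤ Fintype.card ι) : ∃ b : Basis ι R M, ⇑b = v := by
  let f := Fintype.linearCombination R v
  let g := LinearMap.pi φ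
  have hgf : ⇑g ∘ ⇑f = (Matrix.of fun j k => φ j (v k)).mulVec := by
    ext c j
    simp [f, g, Matrix.mulVec, dotProduct, Fintype.linearCombination_apply, mul_comm]
  have hgf_bij : Function.Bijective (⇑g ∘ ⇑f) := by
    rw [hgf, ← Matrix.isUnit_iff_isUnit_det] at *
    exact ⟨Matrix.mulVec_injective_of_isUnit hdet, Matrix.mulVec_surjective_iff_isUnit.2 hdet⟩
  have hg : Function.Bijective g := by
    refine OrzechProperty.bijective_of_surjective_of_finrank_le g hgf_bij.2.of_comp ?_
    simpa using hrank
  have hf : Function.Bijective f := (hg.of_comp_iff' f).1 hgf_bij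
  refine ⟨.ofEquivFun (LinearEquiv.ofBijective f hf).symm, ?_⟩
  ext; simp [f]

theorem det_pairing_ne_and_ne_add_one {n : ℕ} [NeZero n] {P : Type*} [AddCommGroup P]
    [Module ℤ P] (B : P →ₗ[ℤ] P →ₗ[ℤ] ℤ) {A : ZMod n → P}
    (h1 : ∀ i : ZMod n, B (A i) (A (i + 1)) = 1)
    (h2 : ∀ i j : ZMod n, j ≠ i - 1 → j ≠ i → j ≠ i + 1 → B (A i) (A j) = 0) (i : ZMod n) :
    (Matrix.of fun j k : {j : ZMod n // j ≠ i ∧ j ≠ i + 1} => B (A (j.1 - 1)) (A k.1)).det = 1 := by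
  have htri : (Matrix.of fun j k : {j : ZMod n // j ≠ i ∧ j ≠ i + 1} =>
      B (A (j.1 - 1)) (A k.1)).BlockTriangular fun j => OrderDual.toDual (j.1 - i).val := by
    intro j k hjk
    have hj := ZMod.two_le_val_sub j.2.1 j.2.2
    apply h2
    · simpa [sub_sub, one_add_one_eq_two] using ZMod.ne_sub_natCast_of_val_sub_lt (d := 2) hj hjk
    · simpa using ZMod.ne_sub_natCast_of_val_sub_lt (d := 1) (by omega) hjk
    · simpa using ZMod.ne_sub_natCast_of_val_sub_lt (d := 0) (by omega) hjk
  have hinj : Function.Injective fun j : {j : ZMod n // j ≠ i ∧ j ≠ i + 1} =>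
      OrderDual.toDual (j.1 - i).val :=
    fun j k h => Subtype.ext (sub_left_injective (ZMod.val_injective n h))
  rw [htri.det_eq_prod_diag hinj]
  exact Finset.prod_eq_one fun j _ => by simpa using h1 (j.1 - 1)

theorem abstract_toric_system_complement_basis_general
    (n : ℕ) (hn : 3 ≤ n) [NeZero n]
    (P : Type*) [AddCommGroup P] [Module ℤ P] [Module.Free ℤ P]
    (hrank : Module.finrank ℤ P = n - 2)
    (B : P →ₗ[ℤ] P →ₗ[ℤ] ℤ)
    (A : ZMod n → P)
    (h1 : ∀ i : ZMod n, B (A i) (A (i + 1)) = 1)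
    (h2 : ∀ i j : ZMod n, j ≠ i - 1 → j ≠ i → j ≠ i + 1 → B (A i) (A j) = 0) :
    ∀ i : ZMod n, ∃ b : Module.Basis {j : ZMod n // j ≠ i ∧ j ≠ i + 1} ℤ P,
      ∀ j : {j : ZMod n // j ≠ i ∧ j ≠ i + 1}, b j = A j.1 := by
  intro i
  have : Module.Finite ℤ P := Module.finite_of_finrank_pos (by omega)
  obtain ⟨b, hb⟩ := Basis.exists_coe_eq_of_isUnit_det_pairing (fun k => A k.1)
    (fun j => B (A (j.1 - 1))) (by rw [det_pairing_ne_and_ne_add_one B h1 h2 i]; exact isUnit_one)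
    (hrank ▸ ZMod.sub_two_le_card_ne_and_ne_add_one i)
  exact ⟨b, congrFun hb⟩

/-- For a family `A : ZMod n → P` satisfying conditions (i) and (ii) of an
abstract toric system in a free `ℤ`-module `P` of rank `n - 2` with a symmetric bilinear form,
for every `i` the family `(A j)_{j ≠ i, j ≠ i + 1}` of `n - 2` elements is a `ℤ`-basis of `P`. -/
theorem abstract_toric_system_complement_basis
    (n : ℕ) (hn : 3 ≤ n) [NeZero n]
    (P : Type*) [AddCommGroup P] [Module ℤ P] [Module.Free ℤ P]
    (hrank : Module.finrank ℤ P = n - 2)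
    (B : P →ₗ[ℤ] P →ₗ[ℤ] ℤ) (hsymm : ∀ x y : P, B x y = B y x)
    (A : ZMod n → P)
    (h1 : ∀ i : ZMod n, B (A i) (A (i + 1)) = 1)
    (h2 : ∀ i j : ZMod n, j ≠ i - 1 → j ≠ i → j ≠ i + 1 → B (A i) (A j) = 0) :
    ∀ i : ZMod n, ∃ b : Module.Basis {j : ZMod n // j ≠ i ∧ j ≠ i + 1} ℤ P,
      ∀ j : {j : ZMod n // j ≠ i ∧ j ≠ i + 1}, b j = A j.1 :=
  abstract_toric_system_complement_basis_general n hn P hrank B A h1 h2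
end

section
/- Let l : ZMod n → ℤ² be toric fan data with n ≥ 5 and self-intersection numbers a_i. Then there exists i ∈ ZMod n with a_i = −1, equivalently l_{i−1} + l_{i+1} = l_i. (This is the combinatorial content of the statement that every smooth complete toric surface can be obtained by a finite sequence of equivariant blow-ups of ℙ² or a Hirzebruch surface 𝔽_a.) -/
/-!
Suppose no `a i` equals `-1`. If `a ≤ -2` on the `n - 2` indices following some `q`, then
`Y t = det2 (l q) (l (q + t))` satisfies `Y 0 = 0`, `Y 1 = 1` and `Y (t + 2) ≥ 2 Y (t + 1) - Y t`,
so it grows by at least one per step, contradicting `Y (n - 1) = det2 (l q) (l (q - 1)) = -1`.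
Hence every run of `n - 2` consecutive indices contains some `a j ≥ 0`. On the other hand, if
`a k ≥ 0` then `l (k - 1) + l (k + 1)` is a nonpositive multiple of `l k`, and condition (b)
for the two cones at `l k` puts every other ray strictly to the right of `l (k + 1)`. For
`n ≥ 5` this forbids two indices with `a ≥ 0` at cyclic distance at least two, whereas the
runs of `n - 2` indices force `a k, a (k + 1), a (k + 2) ≥ 0`.
-/

def det2 (u v : ℤ × ℤ) : ℤ := u.1 * v.2 - u.2 * v.1

def IsToricFanData (n : ℕ) (l : ZMod n → ℤ × ℤ) : Prop :=
  (∀ i : ZMod n, det2 (l i) (l (i + 1)) = 1) ∧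
  (∀ i k : ZMod n, k ≠ i → k ≠ i + 1 →
    ¬ ∃ α β : ℤ, 0 ≤ α ∧ 0 ≤ β ∧ l k = α • l i + β • l (i + 1))

lemma det2_self (u : ℤ × ℤ) : det2 u u = 0 := by
  rw [det2]; ring

lemma det2_antisymm (u v : ℤ × ℤ) : det2 u v = -det2 v u := by
  simp only [det2]; ring

lemma det2_rel_right {A B C : ℤ × ℤ} {c : ℤ} (h : A + c • B + C = 0) (v : ℤ × ℤ) :
    det2 v A + c * det2 v B + det2 v C = 0 := by
  obtain ⟨h₁, h₂⟩ := Prod.ext_iff.1 h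
  simp only [Prod.fst_add, Prod.snd_add, Prod.smul_fst, Prod.smul_snd, smul_eq_mul,
    Prod.fst_zero, Prod.snd_zero] at h₁ h₂
  simp only [det2]
  linear_combination v.1 * h₂ - v.2 * h₁

lemma det2_rel_left {A B C : ℤ × ℤ} {c : ℤ} (h : A + c • B + C = 0) (v : ℤ × ℤ) :
    det2 A v + c * det2 B v + det2 C v = 0 := by
  have := det2_rel_right h v
  rw [det2_antisymm v A, det2_antisymm v B, det2_antisymm v C] at this
  linarith

lemma eq_det2_smul_add_det2_smul {u w : ℤ × ℤ} (h : det2 u w = 1) (z : ℤ × ℤ) :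
    z = det2 z w • u + det2 u z • w := by
  simp only [det2] at h ⊢
  ext
  · simp only [Prod.fst_add, Prod.smul_fst, smul_eq_mul]
    linear_combination (-z.1) * h
  · simp only [Prod.snd_add, Prod.smul_snd, smul_eq_mul]
    linear_combination (-z.2) * h

lemma ZMod.natCast_ne_zero_of_pos_of_lt {n s : ℕ} (hs : 0 < s) (hsn : s < n) :
    (s : ZMod n) ≠ 0 := fun h =>
  hs.ne' (Nat.eq_zero_of_dvd_of_lt ((ZMod.natCast_eq_zero_iff s n).1 h) hsn)

lemma natCast_le_of_recurrence {Y b : ℕ → ℤ} {m : ℕ} (h₀ : Y 0 = 0) (h₁ : Y 1 = 1)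
    (hrec : ∀ t < m, Y t + b (t + 1) * Y (t + 1) + Y (t + 2) = 0)
    (hb : ∀ t < m, b (t + 1) ≤ -2) : ∀ t ≤ m + 1, (t : ℤ) ≤ Y t := by
  have step : ∀ t ≤ m, (t : ℤ) ≤ Y t ∧ Y t + 1 ≤ Y (t + 1) := by
    intro t
    induction t with
    | zero => simp [h₀, h₁]
    | succ t ih =>
      intro ht
      obtain ⟨hlin, hinc⟩ := ih (by omega)
      have hr := hrec t (by omega)
      have hbt := hb t (by omega)
      push_cast
      exact ⟨by linarith, by nlinarith⟩
  intro t ht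
  cases t with
  | zero => simp [h₀]
  | succ t =>
    obtain ⟨hlin, hinc⟩ := step t (by omega)
    push_cast
    linarith

section

variable {n : ℕ} {l : ZMod n → ℤ × ℤ} {a : ZMod n → ℤ}

lemma exists_neg_two_lt [NeZero n] (hdet : ∀ i : ZMod n, det2 (l i) (l (i + 1)) = 1)
    (ha : ∀ i : ZMod n, l (i - 1) + a i • l i + l (i + 1) = 0) (q : ZMod n) :
    ∃ s : ℕ, 1 ≤ s ∧ s + 2 ≤ n ∧ -2 < a (q + s) := by
  by_contra! hle
  have hgrow := natCast_le_of_recurrence (Y := fun t => det2 (l q) (l (q + t)))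
    (b := fun s => a (q + s)) (m := n - 2) (by simp [det2_self]) (by simpa using hdet q)
    (fun t _ => by
      have := det2_rel_right (ha (q + (t + 1 : ℕ))) (l q)
      rwa [show q + ((t + 1 : ℕ) : ZMod n) - 1 = q + t by push_cast; ring,
        show q + ((t + 1 : ℕ) : ZMod n) + 1 = q + (t + 2 : ℕ) by push_cast; ring] at this)
    (fun t ht => hle (t + 1) (by omega) (by omega)) (n - 1) (by omega)
  have hlast : det2 (l q) (l (q + (n - 1 : ℕ))) = -1 := by
    rw [Nat.cast_pred (NeZero.pos n), ZMod.natCast_self, zero_sub, ← sub_eq_add_neg,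
      det2_antisymm, ← hdet (q - 1), sub_add_cancel]
  have : (0 : ℤ) ≤ (n - 1 : ℕ) := Nat.cast_nonneg _
  simp only [hlast] at hgrow
  omega

namespace IsToricFanData

variable (hl : IsToricFanData n l) (ha : ∀ i : ZMod n, l (i - 1) + a i • l i + l (i + 1) = 0)
include hl ha

/-- Write `l j` in the bases `(l k, l (k + 1))` and `(l (k - 1), l k)`: condition (b) excludes
nonnegative coordinates in either, and `a k ≥ 0` links the two coordinate systems. -/
lemma det2_neg_of_nonneg {k j : ZMod n} (hak : 0 ≤ a k) (hj₁ : j ≠ k - 1) (hj₂ : j ≠ k)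
    (hj₃ : j ≠ k + 1) : det2 (l j) (l (k + 1)) < 0 := by
  set p := det2 (l j) (l (k + 1))
  set q := det2 (l k) (l j)
  by_cases hq : 0 ≤ q
  · by_contra! hp
    exact hl.2 k j hj₂ hj₃ ⟨p, q, hp, hq, eq_det2_smul_add_det2_smul (hl.1 k) (l j)⟩
  · set r := det2 (l (k - 1)) (l j)
    have hr : r = p - a k * q := by
      have := det2_rel_left (ha k) (l j)
      rw [det2_antisymm (l (k + 1))] at this
      linarith
    have hr_neg : r < 0 := by
      by_contra! hr
      have hbasis : det2 (l (k - 1)) (l (k - 1 + 1)) = 1 := hl.1 (k - 1)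
      rw [sub_add_cancel] at hbasis
      have hj := eq_det2_smul_add_det2_smul hbasis (l j)
      rw [det2_antisymm (l j)] at hj
      exact hl.2 (k - 1) j hj₁ (by rwa [sub_add_cancel])
        ⟨-q, r, by linarith, hr, by rwa [sub_add_cancel]⟩
    nlinarith

lemma det2_add_natCast_neg {k : ZMod n} (hak : 0 ≤ a k) {e : ℕ} (he : 2 ≤ e)
    (hen : e + 2 ≤ n) : det2 (l (k + e)) (l (k + 1)) < 0 := by
  refine hl.det2_neg_of_nonneg ha hak (fun h => ?_) (fun h => ?_) (fun h => ?_)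
  · exact ZMod.natCast_ne_zero_of_pos_of_lt (n := n) (s := e + 1) (by omega) (by omega)
      (by push_cast; linear_combination h)
  · exact ZMod.natCast_ne_zero_of_pos_of_lt (n := n) (s := e) (by omega) (by omega)
      (by linear_combination h)
  · exact ZMod.natCast_ne_zero_of_pos_of_lt (n := n) (s := e - 1) (by omega) (by omega)
      (by push_cast [Nat.cast_sub (by omega : 1 ≤ e)]; linear_combination h)

lemma neg_add_two_of_nonneg (hn : 5 ≤ n) {k : ZMod n} (hak : 0 ≤ a k) : a (k + 2) < 0 := by
  have hfar := hl.det2_add_natCast_neg ha hak (e := 3) (by norm_num) (by omega)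
  have hrel := det2_rel_left (ha (k + 2)) (l (k + 1))
  have hbasis : det2 (l (k + 1)) (l (k + 1 + 1)) = 1 := hl.1 (k + 1)
  rw [show k + 2 - 1 = k + 1 by ring, show k + 2 + 1 = k + 3 by ring, det2_self,
    det2_antisymm (l (k + 2))] at hrel
  rw [show k + 1 + 1 = k + 2 by ring] at hbasis
  rw [hbasis] at hrel
  push_cast at hfar
  linarith

lemma neg_add_natCast_of_nonneg (hn : 5 ≤ n) {k : ZMod n} (hak : 0 ≤ a k) {d : ℕ}
    (hd : 2 ≤ d) (hdn : d + 2 ≤ n) : a (k + d) < 0 := by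
  by_contra! hakd
  rcases (show d = 2 ∨ d + 2 = n ∨ (3 ≤ d ∧ d + 3 ≤ n) by omega) with rfl | hdn' | ⟨hd₃, hdn₃⟩
  · exact (hl.neg_add_two_of_nonneg ha hn hak).not_ge (by exact_mod_cast hakd)
  · have := hl.neg_add_two_of_nonneg ha hn hakd
    rw [add_assoc, ← Nat.cast_ofNat, ← Nat.cast_add, hdn', ZMod.natCast_self, add_zero] at this
    exact this.not_ge hak
  · have h₁ := hl.det2_add_natCast_neg ha hak (e := d + 1) (by omega) (by omega)
    have h₂ := hl.det2_add_natCast_neg ha hakd (e := n - d + 1) (by omega) (by omega)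
    rw [show k + (d : ZMod n) + ((n - d + 1 : ℕ) : ZMod n) = k + 1 by
      push_cast [Nat.cast_sub (by omega : d ≤ n), ZMod.natCast_self]; ring] at h₂
    rw [det2_antisymm, Nat.cast_succ, ← add_assoc] at h₁
    linarith

lemma nonneg_add_one_of_nonneg [NeZero n] (hn : 5 ≤ n) (hno : ∀ i, a i ≠ -1) {k : ZMod n}
    (hak : 0 ≤ a k) : 0 ≤ a (k + 1) := by
  obtain ⟨s, hs₁, hsn, hs⟩ := exists_neg_two_lt hl.1 ha k
  have hks : 0 ≤ a (k + s) := by have := hno (k + s); omega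
  obtain rfl | hs₂ : s = 1 ∨ 2 ≤ s := by omega
  · simpa using hks
  · exact absurd hks (hl.neg_add_natCast_of_nonneg ha hn hak hs₂ hsn).not_ge

end IsToricFanData

end

/-- For toric fan data `l : ZMod n → ℤ²` with `n ≥ 5` and self-intersection
numbers `a i`, there exists `i` with `a i = -1`, equivalently `l (i-1) + l (i+1) = l i`
(the surface admits an equivariant blow-down). -/
theorem toric_fan_data_exists_blowdown
    (n : ℕ) (hn : 5 ≤ n) [NeZero n]
    (l : ZMod n → ℤ × ℤ) (hl : IsToricFanData n l)
    (a : ZMod n → ℤ)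
    (ha : ∀ i : ZMod n, l (i - 1) + a i • l i + l (i + 1) = 0) :
    ∃ i : ZMod n, a i = -1 ∧ l (i - 1) + l (i + 1) = l i := by
  suffices h : ∃ i, a i = -1 by
    obtain ⟨i, hi⟩ := h
    refine ⟨i, hi, ?_⟩
    have := ha i
    rw [hi, neg_one_smul] at this
    linear_combination this
  by_contra! hno
  obtain ⟨s, -, -, hs⟩ := exists_neg_two_lt hl.1 ha 0
  have h₀ : 0 ≤ a (0 + s) := by have := hno (0 + s); omega
  have h₂ := hl.nonneg_add_one_of_nonneg ha hn hno (hl.nonneg_add_one_of_nonneg ha hn hno h₀)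
  rw [add_assoc, one_add_one_eq_two] at h₂
  exact (hl.neg_add_natCast_of_nonneg ha hn h₀ (d := 2) le_rfl (by omega)).not_ge
    (by exact_mod_cast h₂)
end

section
/- Let n ≥ 4, let P be a free ℤ-module of rank n − 2 with a symmetric ℤ-bilinear form ⟨·,·⟩, let A : ZMod n → P be an abstract toric system, and let i ∈ ZMod n with ⟨A_i, A_i⟩ = −1. Let A' be the cyclic family of n − 1 elements obtained from A by replacing the three consecutive terms A_{i−1}, A_i, A_{i+1} by the two consecutive terms A_{i−1} + A_i, A_{i+1} + A_i and leaving all other terms unchanged (the blow-down of A at i). Then: every term of A' lies in the sublattice A_i^⊥ = {x ∈ P : ⟨A_i, x⟩ = 0}; A_i^⊥ is a free ℤ-module of rank n − 3; and A' is an abstract toric system of length n − 1 in A_i^⊥ with the restricted bilinear form (in particular ∑_j ⟨A'_j, A'_j⟩ = 12 − 3(n−1)). -/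
/-!
Put `e = A i`, so `⟨e, e⟩ = -1`, and let `σ = blowdownIndex i` enumerate `ZMod n ∖ {i}` cyclically,
starting at `i + 1`. The blow-down is `A' j = π (A (σ j))`, where `π x = x + ⟨x, e⟩ • e` is the
orthogonal projection onto `e^⊥`, so that
`⟨A' j, A' k⟩ = ⟨A (σ j), A (σ k)⟩ + ⟨A (σ j), e⟩ * ⟨A (σ k), e⟩`.
The correction term is `1` exactly when both `σ j` and `σ k` are neighbours `i ± 1` of `i`; these
become the two ends of `A'`, which are adjacent in `ZMod (n - 1)`, and this repairs the one broken
adjacency. Summing over `j` adds `-⟨e, e⟩ = 1` for the removed term and `1` for each neighbour.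
Finally `e^⊥` is the kernel of `⟨e, ·⟩`, which is onto since `⟨e, A (i + 1)⟩ = 1`, so it has
corank one.
-/

theorem LinearMap.finrank_ker_add_one_of_surjective {R M : Type*} [CommRing R] [IsDomain R]
    [IsPrincipalIdealRing R] [AddCommGroup M] [Module R M] [Module.Free R M] [Module.Finite R M]
    {f : M →ₗ[R] R} (hf : Function.Surjective f) :
    Module.finrank R (LinearMap.ker f) + 1 = Module.finrank R M := by
  rw [← (LinearMap.ker f).finrank_quotient_add_finrank, add_comm,
    (f.quotKerEquivOfSurjective hf).finrank_eq, Module.finrank_self]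

theorem LinearMap.free_ker_and_finrank_ker_add_one_of_surjective_int {P : Type*} [AddCommGroup P]
    [Module ℤ P] [Module.Free ℤ P] [Module.Finite ℤ P] {f : P →ₗ[ℤ] ℤ}
    (hf : Function.Surjective f) :
    Module.Free ℤ (LinearMap.ker f) ∧
      Module.finrank ℤ (LinearMap.ker f) + 1 = Module.finrank ℤ P := by
  -- `Module ℤ (ker f)` elaborates to `AddCommGroup.toIntModule`, which is only propositionally
  -- equal to `Submodule.module`.
  rw [Subsingleton.elim (AddCommGroup.toIntModule (LinearMap.ker f)) (LinearMap.ker f).module]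
  exact ⟨inferInstance, finrank_ker_add_one_of_surjective hf⟩

section Projection

variable {R M : Type*} [CommRing R] [AddCommGroup M] [Module R M] {B : M →ₗ[R] M →ₗ[R] R} {e : M}

theorem apply_add_apply_smul_eq_zero (hB : ∀ x y, B x y = B y x) (he : B e e = -1) (x : M) :
    B e (x + B x e • e) = 0 := by
  simp [he, hB e x]

theorem apply_add_apply_smul_add_apply_smul (hB : ∀ x y, B x y = B y x) (he : B e e = -1)
    (x y : M) : B (x + B x e • e) (y + B y e • e) = B x y + B x e * B y e := by
  simp only [map_add, map_smul, LinearMap.add_apply, LinearMap.smul_apply, smul_eq_mul, he, hB e y]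
  ring

end Projection

namespace ZMod

variable {n : ℕ}

theorem natCast_inj_of_lt {a b : ℕ} (ha : a < n) (hb : b < n) : (a : ZMod n) = b ↔ a = b := by
  rw [natCast_eq_natCast_iff', Nat.mod_eq_of_lt ha, Nat.mod_eq_of_lt hb]

theorem natCast_ne_zero_of_lt {k : ℕ} (h0 : k ≠ 0) (hk : k < n) : (k : ZMod n) ≠ 0 := fun h =>
  h0 ((natCast_inj_of_lt hk (by omega)).1 (h.trans Nat.cast_zero.symm))

def blowdownIndex (i : ZMod n) (j : ZMod (n - 1)) : ZMod n := i + ((j.val + 1 : ℕ) : ZMod n)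

variable [NeZero (n - 1)]

theorem val_add_one_of_val_ne {j : ZMod (n - 1)} (hj : j.val ≠ n - 2) :
    (j + 1).val = j.val + 1 := by
  have := j.val_lt
  calc (j + 1).val = ((j.val + 1 : ℕ) : ZMod (n - 1)).val := by rw [Nat.cast_succ, natCast_zmod_val]
    _ = j.val + 1 := val_cast_of_lt (by omega)

theorem add_one_eq_zero_of_val_eq {j : ZMod (n - 1)} (hj : j.val = n - 2) : j + 1 = 0 := by
  have := NeZero.ne (n - 1)
  calc j + 1 = ((j.val + 1 : ℕ) : ZMod (n - 1)) := by rw [Nat.cast_succ, natCast_zmod_val]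
    _ = 0 := by rw [hj, show n - 2 + 1 = n - 1 by omega, natCast_self]

theorem blowdownIndex_ne (i : ZMod n) (j : ZMod (n - 1)) : blowdownIndex i j ≠ i := by
  have := j.val_lt
  exact fun h => natCast_ne_zero_of_lt (Nat.succ_ne_zero _) (by omega) (add_eq_left.1 h)

theorem blowdownIndex_injective (i : ZMod n) : Function.Injective (blowdownIndex i) := by
  intro j k h
  have := j.val_lt
  have := k.val_lt
  have hval := (natCast_inj_of_lt (by omega) (by omega)).1 (add_left_cancel h)
  exact val_injective _ (by omega)

theorem blowdownIndex_eq_add_one_iff (i : ZMod n) (j : ZMod (n - 1)) :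
    blowdownIndex i j = i + 1 ↔ j.val = 0 := by
  have := j.val_lt
  rw [blowdownIndex, add_right_inj, ← Nat.cast_one (R := ZMod n),
    natCast_inj_of_lt (by omega) (by omega)]
  omega

theorem blowdownIndex_eq_sub_one_iff (i : ZMod n) (j : ZMod (n - 1)) :
    blowdownIndex i j = i - 1 ↔ j.val = n - 2 := by
  have := j.val_lt
  have hsub : i - 1 = i + ((n - 1 : ℕ) : ZMod n) := by
    rw [Nat.cast_sub (by omega), natCast_self]; ring
  rw [hsub, blowdownIndex, add_right_inj, natCast_inj_of_lt (by omega) (by omega)]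
  omega

theorem blowdownIndex_add_one (i : ZMod n) {j : ZMod (n - 1)} (hj : j.val ≠ n - 2) :
    blowdownIndex i (j + 1) = blowdownIndex i j + 1 := by
  rw [blowdownIndex, blowdownIndex, val_add_one_of_val_ne hj]
  push_cast
  ring_nf

theorem eq_add_one_of_blowdownIndex_eq {i : ZMod n} {j k : ZMod (n - 1)}
    (h : blowdownIndex i k = blowdownIndex i j + 1) : k = j + 1 := by
  by_cases hj : j.val = n - 2
  · rw [(blowdownIndex_eq_sub_one_iff i j).2 hj, sub_add_cancel] at h
    exact absurd h (blowdownIndex_ne i k)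
  · rw [← blowdownIndex_add_one i hj] at h
    exact blowdownIndex_injective i h

theorem sum_blowdownIndex [NeZero n] {N : Type*} [AddCommMonoid N] (i : ZMod n)
    (f : ZMod n → N) : ∑ j, f (blowdownIndex i j) = ∑ k ∈ Finset.univ.erase i, f k := by
  have himage : Finset.univ.image (blowdownIndex i) = Finset.univ.erase i := by
    refine Finset.eq_of_subset_of_card_le (fun k hk => ?_) ?_
    · obtain ⟨j, -, rfl⟩ := Finset.mem_image.1 hk
      exact Finset.mem_erase.2 ⟨blowdownIndex_ne i j, Finset.mem_univ _⟩
    · rw [Finset.card_image_of_injective _ (blowdownIndex_injective i),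
        Finset.card_erase_of_mem (Finset.mem_univ _), Finset.card_univ, Finset.card_univ, card,
        card]
  rw [← himage, Finset.sum_image (blowdownIndex_injective i).injOn]

end ZMod

open ZMod

/-- Conditions (i) and (ii) of an abstract toric system. -/
structure IsCyclicChain {R M : Type*} [CommRing R] [AddCommGroup M] [Module R M] {n : ℕ}
    (B : M →ₗ[R] M →ₗ[R] R) (A : ZMod n → M) : Prop where
  apply_add_one : ∀ i, B (A i) (A (i + 1)) = 1
  apply_eq_zero : ∀ i j, j ≠ i - 1 → j ≠ i → j ≠ i + 1 → B (A i) (A j) = 0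

def blowdown {R M : Type*} [CommRing R] [AddCommGroup M] [Module R M] {n : ℕ}
    (B : M →ₗ[R] M →ₗ[R] R) (A : ZMod n → M) (i : ZMod n) (j : ZMod (n - 1)) : M :=
  A (blowdownIndex i j) + B (A (blowdownIndex i j)) (A i) • A i

namespace IsCyclicChain

variable {R M : Type*} [CommRing R] [AddCommGroup M] [Module R M] {n : ℕ}
  {B : M →ₗ[R] M →ₗ[R] R} {A : ZMod n → M}

theorem apply_sub_one_add_one (hA : IsCyclicChain B A) (hn : 4 ≤ n) (i : ZMod n) :
    B (A (i - 1)) (A (i + 1)) = 0 := by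
  have h₁ : (1 : ZMod n) ≠ 0 := by exact_mod_cast natCast_ne_zero_of_lt one_ne_zero (by omega)
  have h₂ : (2 : ZMod n) ≠ 0 := by exact_mod_cast natCast_ne_zero_of_lt two_ne_zero (by omega)
  have h₃ : (3 : ZMod n) ≠ 0 := by exact_mod_cast natCast_ne_zero_of_lt three_ne_zero (by omega)
  exact hA.apply_eq_zero _ _ (fun h => h₃ (by linear_combination h))
    (fun h => h₂ (by linear_combination h)) (fun h => h₁ (by linear_combination h))

theorem sum_apply_self_sq_erase [NeZero n] (hA : IsCyclicChain B A) (hB : ∀ x y, B x y = B y x)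
    (hn : 3 ≤ n) (i : ZMod n) :
    ∑ k ∈ Finset.univ.erase i, B (A k) (A i) * B (A k) (A i) = 2 := by
  have hprev : B (A (i - 1)) (A i) = 1 := by simpa using hA.apply_add_one (i - 1)
  have hnext : B (A (i + 1)) (A i) = 1 := by rw [hB, hA.apply_add_one]
  have h₁ : (1 : ZMod n) ≠ 0 := by exact_mod_cast natCast_ne_zero_of_lt one_ne_zero (by omega)
  have h₂ : (2 : ZMod n) ≠ 0 := by exact_mod_cast natCast_ne_zero_of_lt two_ne_zero (by omega)
  rw [Finset.sum_eq_add_of_mem (i - 1) (i + 1), hprev, hnext]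
  · norm_num
  · exact Finset.mem_erase.2 ⟨fun h => h₁ (by linear_combination -h), Finset.mem_univ _⟩
  · exact Finset.mem_erase.2 ⟨fun h => h₁ (by linear_combination h), Finset.mem_univ _⟩
  · exact fun h => h₂ (by linear_combination -h)
  · intro k hk hki
    rw [hB, hA.apply_eq_zero i k hki.1 (Finset.ne_of_mem_erase hk) hki.2, mul_zero]

theorem apply_blowdown (hB : ∀ x y, B x y = B y x) {i : ZMod n} (hi : B (A i) (A i) = -1)
    (j k : ZMod (n - 1)) :
    B (blowdown B A i j) (blowdown B A i k) = B (A (blowdownIndex i j)) (A (blowdownIndex i k))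
      + B (A (blowdownIndex i j)) (A i) * B (A (blowdownIndex i k)) (A i) :=
  apply_add_apply_smul_add_apply_smul hB hi _ _

variable [NeZero (n - 1)]

theorem apply_blowdownIndex_self (hA : IsCyclicChain B A) (hB : ∀ x y, B x y = B y x)
    (i : ZMod n) (j : ZMod (n - 1)) :
    B (A (blowdownIndex i j)) (A i) = if j.val = 0 ∨ j.val = n - 2 then 1 else 0 := by
  by_cases h0 : j.val = 0
  · rw [if_pos (Or.inl h0), (blowdownIndex_eq_add_one_iff i j).2 h0, hB, hA.apply_add_one]
  by_cases h2 : j.val = n - 2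
  · rw [if_pos (Or.inr h2), (blowdownIndex_eq_sub_one_iff i j).2 h2]
    simpa using hA.apply_add_one (i - 1)
  rw [if_neg (by tauto), hB]
  exact hA.apply_eq_zero _ _ (mt (blowdownIndex_eq_sub_one_iff i j).1 h2) (blowdownIndex_ne i j)
    (mt (blowdownIndex_eq_add_one_iff i j).1 h0)

theorem blowdown_eq_ite (hA : IsCyclicChain B A) (hB : ∀ x y, B x y = B y x)
    (i : ZMod n) (j : ZMod (n - 1)) :
    blowdown B A i j = if j.val = 0 then A (i + 1) + A i
      else if j.val = n - 2 then A (i - 1) + A i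
      else A (i + 1 + (j.val : ZMod n)) := by
  rw [blowdown, hA.apply_blowdownIndex_self hB]
  by_cases h0 : j.val = 0
  · rw [if_pos (Or.inl h0), if_pos h0, (blowdownIndex_eq_add_one_iff i j).2 h0, one_smul]
  by_cases h2 : j.val = n - 2
  · rw [if_pos (Or.inr h2), if_neg h0, if_pos h2, (blowdownIndex_eq_sub_one_iff i j).2 h2,
      one_smul]
  rw [if_neg (by tauto), if_neg h0, if_neg h2, zero_smul, add_zero, blowdownIndex]
  congr 1
  push_cast
  ring

theorem blowdown_apply_add_one (hA : IsCyclicChain B A) (hB : ∀ x y, B x y = B y x)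
    (hn : 4 ≤ n) {i : ZMod n} (hi : B (A i) (A i) = -1) (j : ZMod (n - 1)) :
    B (blowdown B A i j) (blowdown B A i (j + 1)) = 1 := by
  rw [apply_blowdown hB hi, hA.apply_blowdownIndex_self hB, hA.apply_blowdownIndex_self hB]
  by_cases hj : j.val = n - 2
  · rw [add_one_eq_zero_of_val_eq hj, (blowdownIndex_eq_sub_one_iff i j).2 hj,
      (blowdownIndex_eq_add_one_iff i 0).2 val_zero, hA.apply_sub_one_add_one hn]
    simp [hj]
  · have hends : ¬ ((j.val = 0 ∨ j.val = n - 2) ∧ (j.val + 1 = 0 ∨ j.val + 1 = n - 2)) := by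
      omega
    rw [blowdownIndex_add_one i hj, hA.apply_add_one, val_add_one_of_val_ne hj,
      ite_zero_mul_ite_zero, if_neg hends, add_zero]

theorem blowdown_apply_eq_zero (hA : IsCyclicChain B A) (hB : ∀ x y, B x y = B y x)
    {i : ZMod n} (hi : B (A i) (A i) = -1) {j k : ZMod (n - 1)} (hk₁ : k ≠ j - 1) (hk₂ : k ≠ j)
    (hk₃ : k ≠ j + 1) : B (blowdown B A i j) (blowdown B A i k) = 0 := by
  have hσ : B (A (blowdownIndex i j)) (A (blowdownIndex i k)) = 0 := by
    refine hA.apply_eq_zero _ _ (fun h => hk₁ ?_) (fun h => hk₂ (blowdownIndex_injective i h))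
      (fun h => hk₃ (eq_add_one_of_blowdownIndex_eq h))
    exact eq_sub_of_add_eq (eq_add_one_of_blowdownIndex_eq (eq_add_of_sub_eq h.symm)).symm
  have hends : ¬ ((j.val = 0 ∨ j.val = n - 2) ∧ (k.val = 0 ∨ k.val = n - 2)) := by
    rintro ⟨hj | hj, hk | hk⟩
    · exact hk₂ (val_injective _ (hk.trans hj.symm))
    · rw [(val_eq_zero j).1 hj, ← add_one_eq_zero_of_val_eq hk] at hk₁
      exact hk₁ (by ring)
    · exact hk₃ (by rw [add_one_eq_zero_of_val_eq hj, ← val_eq_zero, hk])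
    · exact hk₂ (val_injective _ (hk.trans hj.symm))
  rw [apply_blowdown hB hi, hσ, hA.apply_blowdownIndex_self hB, hA.apply_blowdownIndex_self hB,
    ite_zero_mul_ite_zero, if_neg hends, add_zero]

theorem sum_blowdown_apply_self [NeZero n] (hA : IsCyclicChain B A) (hB : ∀ x y, B x y = B y x)
    (hn : 3 ≤ n) {i : ZMod n} (hi : B (A i) (A i) = -1) :
    ∑ j, B (blowdown B A i j) (blowdown B A i j) = ∑ k, B (A k) (A k) + 3 := by
  simp only [apply_blowdown hB hi]
  rw [sum_blowdownIndex i (fun k => B (A k) (A k) + B (A k) (A i) * B (A k) (A i)),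
    Finset.sum_add_distrib, Finset.sum_erase_eq_sub (Finset.mem_univ i), hi,
    hA.sum_apply_self_sq_erase hB hn i]
  ring

theorem blowdown (hA : IsCyclicChain B A) (hB : ∀ x y, B x y = B y x) (hn : 4 ≤ n)
    {i : ZMod n} (hi : B (A i) (A i) = -1) : IsCyclicChain B (blowdown B A i) where
  apply_add_one := hA.blowdown_apply_add_one hB hn hi
  apply_eq_zero _ _ := hA.blowdown_apply_eq_zero hB hi

end IsCyclicChain

/-- (Blow-down of an abstract toric system.)  Let `A : ZMod n → P` (`n ≥ 4`)
be an abstract toric system in a free `ℤ`-module `P` of rank `n - 2` with a symmetric bilinear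
form, and let `i` satisfy `⟨A i, A i⟩ = -1`.  Let `A'` be the cyclic family of `n - 1`
elements obtained by replacing the consecutive terms `A (i-1), A i, A (i+1)` by
`A (i-1) + A i, A (i+1) + A i`.  Then every term of `A'` lies in `A i ^⊥ = ker ⟨A i, ·⟩`,
this sublattice is free of rank `n - 3`, and `A'` is an abstract toric system of length
`n - 1` in it (with the restricted form); in particular `∑ j, ⟨A' j, A' j⟩ = 12 - 3(n-1)`. -/
theorem abstract_toric_system_blowdown
    (n : ℕ) (hn : 4 ≤ n) [NeZero n] [NeZero (n - 1)]
    (P : Type*) [AddCommGroup P] [Module ℤ P] [Module.Free ℤ P]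
    (hrank : Module.finrank ℤ P = n - 2)
    (B : P →ₗ[ℤ] P →ₗ[ℤ] ℤ) (hsymm : ∀ x y : P, B x y = B y x)
    (A : ZMod n → P)
    (h1 : ∀ i : ZMod n, B (A i) (A (i + 1)) = 1)
    (h2 : ∀ i j : ZMod n, j ≠ i - 1 → j ≠ i → j ≠ i + 1 → B (A i) (A j) = 0)
    (h3 : ∑ i : ZMod n, B (A i) (A i) = 12 - 3 * (n : ℤ))
    (i : ZMod n) (hi : B (A i) (A i) = -1)
    (A' : ZMod (n - 1) → P)
    (hA' : ∀ j : ZMod (n - 1), A' j =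
      if j.val = 0 then A (i + 1) + A i
      else if j.val = n - 2 then A (i - 1) + A i
      else A (i + 1 + (j.val : ZMod n))) :
    (∀ j : ZMod (n - 1), A' j ∈ LinearMap.ker (B (A i))) ∧
    Module.Free ℤ (LinearMap.ker (B (A i))) ∧
    Module.finrank ℤ (LinearMap.ker (B (A i))) = n - 3 ∧
    (∀ j : ZMod (n - 1), B (A' j) (A' (j + 1)) = 1) ∧
    (∀ j k : ZMod (n - 1), k ≠ j - 1 → k ≠ j → k ≠ j + 1 → B (A' j) (A' k) = 0) ∧
    ∑ j : ZMod (n - 1), B (A' j) (A' j) = 12 - 3 * ((n : ℤ) - 1) := by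
  have hA : IsCyclicChain B A := ⟨h1, h2⟩
  obtain rfl : A' = blowdown B A i :=
    funext fun j => (hA' j).trans (hA.blowdown_eq_ite hsymm i j).symm
  have : Module.Finite ℤ P := Module.finite_of_finrank_pos (by omega)
  obtain ⟨hfree, hrank'⟩ := LinearMap.free_ker_and_finrank_ker_add_one_of_surjective_int
    (f := B (A i)) fun c => ⟨c • A (i + 1), by simp [h1]⟩
  have hA'chain := hA.blowdown hsymm hn hi
  refine ⟨fun j => apply_add_apply_smul_eq_zero hsymm hi _, hfree, by omega,
    hA'chain.apply_add_one, hA'chain.apply_eq_zero, ?_⟩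
  rw [hA.sum_blowdown_apply_self hsymm (by omega) hi, h3]
  ring
end

section
/- Let n ≥ 3, let P be a free ℤ-module of rank n − 2 with a symmetric ℤ-bilinear form ⟨·,·⟩, and let A : ZMod n → P satisfy conditions (i) and (ii) of an abstract toric system. Let 3 ≤ t ≤ n and let I_1, …, I_t be a partition of ZMod n into t nonempty sets, each consisting of cyclically consecutive indices, arranged in cyclic order (for every j ∈ ZMod t, the interval I_{j+1} immediately follows I_j in the cyclic order of ZMod n). Define A'_j := ∑_{k ∈ I_j} A_k. Then ⟨A'_j, A'_{j+1}⟩ = 1 for every j ∈ ZMod t, and ⟨A'_j, A'_k⟩ = 0 whenever j, k ∈ ZMod t with k ∉ {j−1, j, j+1} (i.e., A'_1, …, A'_t is a short toric system). -/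
/-!
Expanding `⟨A'_j, A'_k⟩` bilinearly gives a sum of `⟨A_p, A_q⟩` over `p ∈ I_j`, `q ∈ I_k`.
Going around the circle from `I_j`, the interval `I_k` starts `d` steps after the start of `I_j`,
where `d` is the total length of the intervals from `I_j` up to `I_k`. As long as at least one
interval lies strictly between `I_k` and `I_j` (which is where `t ≥ 3` enters), every
difference `q - p` is a natural number in `[1, n - 2]`, so `⟨A_p, A_q⟩` vanishes unless
`q = p + 1`. That happens for exactly one pair when `k = j + 1` (the last index of `I_j` and the
first of `I_{j+1}`) and for no pair when `I_j` and `I_k` are not adjacent.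
-/

open Finset

section Gram

variable {n : ℕ} {R : Type*} [AddCommMonoid R] {g : ZMod n → ZMod n → R}

theorem natCast_ne_natCast_of_lt_of_lt_add {x y : ℕ} (hxy : x < y) (hyx : y < x + n) :
    (x : ZMod n) ≠ y := by
  intro h
  have hdvd : n ∣ y - x := by
    rw [← ZMod.natCast_eq_zero_iff, Nat.cast_sub hxy.le, h, sub_self]
  exact absurd (Nat.le_of_dvd (by omega) hdvd) (by omega)

theorem gram_add_natCast_eq_zero
    (hg : ∀ i j : ZMod n, j ≠ i - 1 → j ≠ i → j ≠ i + 1 → g i j = 0) (a : ZMod n) {x y : ℕ}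
    (hxy : x + 2 ≤ y) (hyx : y + 2 ≤ x + n) : g (a + x) (a + y) = 0 := by
  apply hg
  · intro h
    apply natCast_ne_natCast_of_lt_of_lt_add (n := n) (x := x) (y := y + 1) (by omega) (by omega)
    push_cast
    linear_combination -h
  · intro h
    exact natCast_ne_natCast_of_lt_of_lt_add (by omega) (by omega) (add_left_cancel h).symm
  · intro h
    apply natCast_ne_natCast_of_lt_of_lt_add (n := n) (x := x + 1) (y := y) (by omega) (by omega)
    push_cast
    linear_combination -h

theorem sum_range_sum_range_gram_eq_zero
    (hg : ∀ i j : ZMod n, j ≠ i - 1 → j ≠ i → j ≠ i + 1 → g i j = 0) (a : ZMod n) {u v d : ℕ}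
    (hud : u < d) (hdv : d + v < n) :
    ∑ x ∈ range u, ∑ y ∈ range v, g (a + x) (a + d + y) = 0 := by
  refine sum_eq_zero fun x hx => sum_eq_zero fun y hy => ?_
  rw [mem_range] at hx hy
  rw [add_assoc, ← Nat.cast_add]
  exact gram_add_natCast_eq_zero hg a (by omega) (by omega)

theorem sum_range_sum_range_gram_eq_one [One R] (hg1 : ∀ i : ZMod n, g i (i + 1) = 1)
    (hg : ∀ i j : ZMod n, j ≠ i - 1 → j ≠ i → j ≠ i + 1 → g i j = 0) (a : ZMod n) {u v : ℕ}
    (hu : 0 < u) (hv : 0 < v) (huv : u + v < n) :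
    ∑ x ∈ range u, ∑ y ∈ range v, g (a + x) (a + u + y) = 1 := by
  rw [sum_eq_single_of_mem (u - 1) (by simpa), sum_eq_single_of_mem 0 (by simpa)]
  · rw [Nat.cast_zero, add_zero,
      show a + (u : ZMod n) = a + ((u - 1 : ℕ) : ZMod n) + 1 by rw [Nat.cast_pred hu]; ring]
    exact hg1 _
  · intro y hy hy0
    rw [mem_range] at hy
    rw [add_assoc, ← Nat.cast_add]
    exact gram_add_natCast_eq_zero hg a (by omega) (by omega)
  · intro x hx hxu
    rw [mem_range] at hx
    refine sum_eq_zero fun y hy => ?_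
    rw [mem_range] at hy
    rw [add_assoc, ← Nat.cast_add]
    exact gram_add_natCast_eq_zero hg a (by omega) (by omega)

end Gram

section CyclicIntervals

variable {t : ℕ} {M : Type*} [AddCommMonoid M]

theorem apply_add_natCast_eq_add_sum_range {s f : ZMod t → M}
    (hs : ∀ j, s (j + 1) = s j + f j) (j : ZMod t) (i : ℕ) :
    s (j + i) = s j + ∑ c ∈ range i, f (j + c) := by
  induction i with
  | zero => simp
  | succ i ih => rw [Nat.cast_succ, ← add_assoc, hs, ih, sum_range_succ, add_assoc]

theorem sum_range_add_natCast_eq_sum [NeZero t] (f : ZMod t → M) (j : ZMod t) :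
    ∑ c ∈ range t, f (j + c) = ∑ x, f x := by
  rw [← Equiv.sum_comp (Equiv.addLeft j) f]
  exact sum_nbij' (fun c => (c : ZMod t)) ZMod.val (by simp) (by simp [ZMod.val_lt])
    (fun c hc => ZMod.val_cast_of_lt (mem_range.1 hc)) (fun x _ => ZMod.natCast_zmod_val x)
    (fun _ _ => rfl)

theorem strictMono_sum_range {f : ℕ → ℕ} (hf : ∀ c, 0 < f c) :
    StrictMono fun i => ∑ c ∈ range i, f c :=
  strictMono_nat_of_lt_succ fun i => by
    rw [sum_range_succ]
    exact Nat.lt_add_of_pos_right (hf i)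

theorem sum_range_sum_range_gram_interval [NeZero t] {n : ℕ} {R : Type*} [AddCommMonoid R]
    [One R] {g : ZMod n → ZMod n → R} (hg1 : ∀ i : ZMod n, g i (i + 1) = 1)
    (hg : ∀ i j : ZMod n, j ≠ i - 1 → j ≠ i → j ≠ i + 1 → g i j = 0)
    {s : ZMod t → ZMod n} {m : ZMod t → ℕ} (hm : ∀ j, 1 ≤ m j) (hsum : ∑ j, m j = n)
    (hnext : ∀ j, s (j + 1) = s j + (m j : ZMod n)) (j : ZMod t) {i : ℕ} (hi : 1 ≤ i)
    (hit : i + 1 < t) :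
    ∑ x ∈ range (m j), ∑ y ∈ range (m (j + i)), g (s j + x) (s (j + i) + y) =
      if i = 1 then 1 else 0 := by
  set D : ℕ → ℕ := fun i => ∑ c ∈ range i, m (j + c) with hD
  have hDmono : StrictMono D := strictMono_sum_range fun c => hm _
  have hDt : D t = n := (sum_range_add_natCast_eq_sum m j).trans hsum
  have hD1 : D 1 = m j := by simp [hD]
  have hDsucc : D (i + 1) = D i + m (j + i) := sum_range_succ _ _
  have hDlt : D (i + 1) < n := hDt ▸ hDmono hit
  have hs : s (j + i) = s j + (D i : ZMod n) := by
    rw [apply_add_natCast_eq_add_sum_range hnext, hD, Nat.cast_sum]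
  rw [hs]
  split_ifs with hi1
  · subst hi1
    rw [hD1]
    exact sum_range_sum_range_gram_eq_one hg1 hg _ (hm j) (hm _) (by omega)
  · exact sum_range_sum_range_gram_eq_zero hg _ (hD1 ▸ hDmono (by omega)) (by omega)

end CyclicIntervals

theorem abstract_toric_system_interval_sums_short_toric_system_general
    (n : ℕ)
    (P : Type*) [AddCommGroup P] [Module ℤ P]
    (B : P →ₗ[ℤ] P →ₗ[ℤ] ℤ)
    (A : ZMod n → P)
    (h1 : ∀ i : ZMod n, B (A i) (A (i + 1)) = 1)
    (h2 : ∀ i j : ZMod n, j ≠ i - 1 → j ≠ i → j ≠ i + 1 → B (A i) (A j) = 0)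
    (t : ℕ) (ht : 3 ≤ t) [NeZero t]
    (s : ZMod t → ZMod n) (m : ZMod t → ℕ)
    (hm : ∀ j : ZMod t, 1 ≤ m j)
    (hsum : ∑ j : ZMod t, m j = n)
    (hnext : ∀ j : ZMod t, s (j + 1) = s j + (m j : ZMod n))
    (A' : ZMod t → P)
    (hA' : ∀ j : ZMod t, A' j = ∑ k ∈ Finset.range (m j), A (s j + (k : ZMod n))) :
    (∀ j : ZMod t, B (A' j) (A' (j + 1)) = 1) ∧
    (∀ j k : ZMod t, k ≠ j - 1 → k ≠ j → k ≠ j + 1 → B (A' j) (A' k) = 0) := by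
  have key : ∀ (j : ZMod t) (i : ℕ), 1 ≤ i → i + 1 < t →
      B (A' j) (A' (j + i)) = if i = 1 then 1 else 0 := by
    intro j i hi hit
    rw [hA', hA', LinearMap.map_sum₂]
    simp only [map_sum]
    exact sum_range_sum_range_gram_interval h1 h2 hm hsum hnext j hi hit
  refine ⟨fun j => by simpa using key j 1 le_rfl (by omega), fun j k hk1 hk2 hk3 => ?_⟩
  obtain ⟨i, hit, rfl⟩ : ∃ i < t, j + i = k :=
    ⟨(k - j).val, ZMod.val_lt _, by rw [ZMod.natCast_zmod_val]; abel⟩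
  have hi0 : i ≠ 0 := by rintro rfl; simp at hk2
  have hi1 : i ≠ 1 := by rintro rfl; simp at hk3
  have hit' : i + 1 ≠ t := by
    intro h
    apply hk1
    have hcast : ((i + 1 : ℕ) : ZMod t) = 0 := h ▸ ZMod.natCast_self t
    push_cast at hcast
    linear_combination hcast
  rw [key j i (by omega) (by omega), if_neg hi1]

/-- Let `A : ZMod n → P` satisfy conditions (i) and (ii) of an abstract toric
system.  Partition `ZMod n` into `t` nonempty cyclic intervals arranged in cyclic order
(encoded by starting points `s j` and lengths `m j ≥ 1` with `∑ m j = n` and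
`s (j+1) = s j + m j`), and set `A' j := ∑_{k ∈ I_j} A k`.  Then `A'` is a short toric
system: `⟨A' j, A' (j+1)⟩ = 1` for all `j` and `⟨A' j, A' k⟩ = 0` for non-adjacent pairs. -/
theorem abstract_toric_system_interval_sums_short_toric_system
    (n : ℕ) (hn : 3 ≤ n) [NeZero n]
    (P : Type*) [AddCommGroup P] [Module ℤ P] [Module.Free ℤ P]
    (hrank : Module.finrank ℤ P = n - 2)
    (B : P →ₗ[ℤ] P →ₗ[ℤ] ℤ) (hsymm : ∀ x y : P, B x y = B y x)
    (A : ZMod n → P)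
    (h1 : ∀ i : ZMod n, B (A i) (A (i + 1)) = 1)
    (h2 : ∀ i j : ZMod n, j ≠ i - 1 → j ≠ i → j ≠ i + 1 → B (A i) (A j) = 0)
    (t : ℕ) (ht : 3 ≤ t) (htn : t ≤ n) [NeZero t]
    (s : ZMod t → ZMod n) (m : ZMod t → ℕ)
    (hm : ∀ j : ZMod t, 1 ≤ m j)
    (hsum : ∑ j : ZMod t, m j = n)
    (hnext : ∀ j : ZMod t, s (j + 1) = s j + (m j : ZMod n))
    (A' : ZMod t → P)
    (hA' : ∀ j : ZMod t, A' j = ∑ k ∈ Finset.range (m j), A (s j + (k : ZMod n))) :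
    (∀ j : ZMod t, B (A' j) (A' (j + 1)) = 1) ∧
    (∀ j k : ZMod t, k ≠ j - 1 → k ≠ j → k ≠ j + 1 → B (A' j) (A' k) = 0) :=
  abstract_toric_system_interval_sums_short_toric_system_general n P B A h1 h2 t ht s m hm hsum
    hnext A' hA'
end

section
/- A quadruple (A_1, A_2, A_3, A_4) in the Picard lattice of the Hirzebruch surface 𝔽_a is a toric system if and only if, after a cyclic rotation of the indices and possibly a reversal of their order, it equals one of the following: (i) (P, s·P + Q, P, −(a + s)·P + Q) for some s ∈ ℤ; or (ii) a is even and the quadruple is (−(a/2)·P + Q, P + s·(−(a/2)·P + Q), −(a/2)·P + Q, P − s·(−(a/2)·P + Q)) for some s ∈ ℤ. -/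
/-!
Since `Pic 𝔽_a` has rank two, the Gram determinant of any three classes vanishes. For three
consecutive members of a toric system this says `xᵢ xᵢ₊₁ xᵢ₊₂ = xᵢ + xᵢ₊₂` for the
self-intersections `xᵢ = Aᵢ²`, while `(-K)² = 8` forces `∑ xᵢ = 0`; these integer equations give
`x₀ = 0` or `x₁ = 0`, so after a rotation `A₀² = 0`. Then `A₀ - A₂` is orthogonal to `A₀` and
`A₁`, which form a basis of the unimodular lattice, so `A₂ = A₀ =: F`. Now `F² = 0` and
`F · (-K) = 2` leave only `F = P` or, for even `a`, `F = -(a/2) P + Q`; `F · A₁ = 1` fixes `A₁` up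
to one integer parameter, and `A₃` is determined by the sum.
-/

open LinearMap (BilinForm)

theorem ZMod.forall_four {p : ZMod 4 → Prop} : (∀ j, p j) ↔ p 0 ∧ p 1 ∧ p 2 ∧ p 3 :=
  ⟨fun h => ⟨h 0, h 1, h 2, h 3⟩,
    fun ⟨h0, h1, h2, h3⟩ j => by fin_cases j <;> assumption⟩

theorem ZMod.sum_four {M : Type*} [AddCommMonoid M] (f : ZMod 4 → M) :
    ∑ j, f j = f 0 + f 1 + f 2 + f 3 :=
  Fin.sum_univ_four f

def quadruple {α : Type*} (v₀ v₁ v₂ v₃ : α) : ZMod 4 → α :=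
  fun j => if j = 0 then v₀ else if j = 1 then v₁ else if j = 2 then v₂ else v₃

section quadruple

variable {α : Type*} (v₀ v₁ v₂ v₃ : α)

@[simp] theorem quadruple_zero : quadruple v₀ v₁ v₂ v₃ 0 = v₀ := rfl
@[simp] theorem quadruple_one : quadruple v₀ v₁ v₂ v₃ 1 = v₁ := rfl
@[simp] theorem quadruple_two : quadruple v₀ v₁ v₂ v₃ 2 = v₂ := rfl
@[simp] theorem quadruple_three : quadruple v₀ v₁ v₂ v₃ 3 = v₃ := rfl

end quadruple

section ToricSystem

variable {R M : Type*} [CommRing R] [AddCommGroup M] [Module R M]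
  {B : BilinForm R M} {κ : M} {A : ZMod 4 → M}

def IsToricSystem (B : BilinForm R M) (κ : M) (A : ZMod 4 → M) : Prop :=
  (∀ i, B (A i) (A (i + 1)) = 1) ∧ B (A 0) (A 2) = 0 ∧ B (A 1) (A 3) = 0 ∧
    A 0 + A 1 + A 2 + A 3 = κ

theorem isToricSystem_iff_cyclic (hB : B.IsSymm) :
    IsToricSystem B κ A ↔
      (∀ i, B (A i) (A (i + 1)) = 1) ∧ (∀ i, B (A i) (A (i + 2)) = 0) ∧ ∑ i, A i = κ := by
  have h22 : (2 : ZMod 4) + 2 = 0 := by decide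
  have h32 : (3 : ZMod 4) + 2 = 1 := by decide
  simp only [IsToricSystem, ZMod.forall_four (p := fun i => B (A i) (A (i + 2)) = 0),
    ZMod.sum_four, zero_add, h22, h32, hB.eq (A 2) (A 0), hB.eq (A 3) (A 1)]
  tauto

theorem isToricSystem_iff :
    IsToricSystem B κ A ↔
      B (A 0) (A 1) = 1 ∧ B (A 1) (A 2) = 1 ∧ B (A 2) (A 3) = 1 ∧ B (A 3) (A 0) = 1 ∧
        B (A 0) (A 2) = 0 ∧ B (A 1) (A 3) = 0 ∧ A 0 + A 1 + A 2 + A 3 = κ := by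
  have h1 : (1 : ZMod 4) + 1 = 2 := by decide
  have h2 : (2 : ZMod 4) + 1 = 3 := by decide
  have h3 : (3 : ZMod 4) + 1 = 0 := by decide
  simp only [IsToricSystem, ZMod.forall_four, zero_add, h1, h2, h3, and_assoc]

namespace IsToricSystem

theorem comp_add_left (hB : B.IsSymm) (h : IsToricSystem B κ A) (r : ZMod 4) :
    IsToricSystem B κ (fun j => A (r + j)) := by
  obtain ⟨h1, h2, hs⟩ := (isToricSystem_iff_cyclic hB).1 h
  refine (isToricSystem_iff_cyclic hB).2 ⟨fun i => ?_, fun i => ?_, ?_⟩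
  · simpa only [add_assoc] using h1 (r + i)
  · simpa only [add_assoc] using h2 (r + i)
  · rw [← hs]; exact Equiv.sum_comp (Equiv.addLeft r) A

theorem comp_neg (hB : B.IsSymm) (h : IsToricSystem B κ A) :
    IsToricSystem B κ (fun j => A (-j)) := by
  obtain ⟨h1, h2, hs⟩ := (isToricSystem_iff_cyclic hB).1 h
  refine (isToricSystem_iff_cyclic hB).2 ⟨fun i => ?_, fun i => ?_, ?_⟩
  · rw [hB.eq, ← h1 (-(i + 1))]; ring_nf
  · rw [hB.eq, ← h2 (-(i + 2))]; ring_nf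
  · rw [← hs]; exact Equiv.sum_comp (Equiv.neg _) A

theorem comp_dihedral (hB : B.IsSymm) (h : IsToricSystem B κ A) (r : ZMod 4) (σ : Bool) :
    IsToricSystem B κ (fun j => A (r + if σ then j else -j)) := by
  cases σ
  · exact (h.comp_add_left hB r).comp_neg hB
  · exact h.comp_add_left hB r

theorem of_comp_dihedral (hB : B.IsSymm) {r : ZMod 4} {σ : Bool}
    (h : IsToricSystem B κ (fun j => A (r + if σ then j else -j))) : IsToricSystem B κ A := by
  convert h.comp_dihedral hB (if σ then -r else r) σ using 2 with j
  cases σ <;> simp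

theorem sum_apply_self_eq (hB : B.IsSymm) (h : IsToricSystem B κ A) :
    ∑ i, B (A i) (A i) = B κ κ - 8 := by
  obtain ⟨h01, h12, h23, h30, h02, h13, rfl⟩ := isToricSystem_iff.1 h
  simp only [ZMod.sum_four, map_add, LinearMap.add_apply]
  rw [hB.eq (A 1) (A 0), hB.eq (A 2) (A 0), hB.eq (A 2) (A 1), hB.eq (A 3) (A 1),
    hB.eq (A 3) (A 2), hB.eq (A 0) (A 3), h01, h12, h23, h30, h02, h13]
  ring

end IsToricSystem

end ToricSystem

theorem Int.eq_zero_or_eq_zero_of_mul_mul_eq_add {x : ZMod 4 → ℤ}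
    (hx : ∀ i, x i * x (i + 1) * x (i + 2) = x i + x (i + 2)) (hs : ∑ i, x i = 0) :
    x 0 = 0 ∨ x 1 = 0 := by
  have e : (1 + 1 : ZMod 4) = 2 ∧ (1 + 2 : ZMod 4) = 3 ∧ (2 + 1 : ZMod 4) = 3 ∧
      (2 + 2 : ZMod 4) = 0 ∧ (3 + 1 : ZMod 4) = 0 ∧ (3 + 2 : ZMod 4) = 1 := by decide
  have h0 := hx 0
  have h1 := hx 1
  have h2 := hx 2
  have h3 := hx 3
  simp only [zero_add, e] at h0 h1 h2 h3
  rw [ZMod.sum_four] at hs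
  by_contra! ⟨hx0, hx1⟩
  have hx2 : x 2 ≠ 0 := fun h => hx0 (by simpa [h, eq_comm] using h0)
  have hx3 : x 3 ≠ 0 := fun h => hx1 (by simpa [h, eq_comm] using h1)
  have h13 : x 1 = x 3 := by
    have : x 0 * x 2 * (x 1 - x 3) = 0 := by linear_combination h0 - h2
    simpa [hx0, hx2, sub_eq_zero] using this
  have h02 : x 0 = x 2 := by
    have : x 1 * x 3 * (x 0 - x 2) = 0 := by linear_combination h3 - h1
    simpa [hx1, hx3, sub_eq_zero] using this
  have h10 : x 1 = -x 0 := by linarith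
  rw [← h02, h10] at h0
  have : x 0 * (x 0 ^ 2 + 2) = 0 := by linear_combination -h0
  exact (mul_ne_zero hx0 (by positivity)) this

def hirzebruchForm (a : ℤ) : BilinForm ℤ (ℤ × ℤ) :=
  LinearMap.mk₂ ℤ (fun u v => u.1 * v.2 + u.2 * v.1 + a * u.2 * v.2)
    (fun _ _ _ => by simp only [Prod.fst_add, Prod.snd_add]; ring)
    (fun _ _ _ => by simp only [Prod.smul_fst, Prod.smul_snd, smul_eq_mul]; ring)
    (fun _ _ _ => by simp only [Prod.fst_add, Prod.snd_add]; ring)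
    (fun _ _ _ => by simp only [Prod.smul_fst, Prod.smul_snd, smul_eq_mul]; ring)

section Hirzebruch

variable {a : ℤ}

theorem hirzebruchForm_apply (u v : ℤ × ℤ) :
    hirzebruchForm a u v = u.1 * v.2 + u.2 * v.1 + a * u.2 * v.2 := rfl

theorem hirzebruchForm_isSymm (a : ℤ) : (hirzebruchForm a).IsSymm :=
  ⟨fun u v => by simp only [hirzebruchForm_apply]; ring⟩

theorem hirzebruchForm_gram_det (a : ℤ) (v : Fin 3 → ℤ × ℤ) :
    (Matrix.of fun i j => hirzebruchForm a (v i) (v j)).det = 0 := by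
  simp only [Matrix.det_fin_three, Matrix.of_apply, hirzebruchForm_apply]
  ring

-- `D` is the coordinate determinant of `u, v`; `D² = -det Gram(u, v) = 1`, so `u, v` is a basis.
theorem hirzebruchForm_eq_zero_of_orthogonal {u v w : ℤ × ℤ} (hu : hirzebruchForm a u u = 0)
    (huv : hirzebruchForm a u v = 1) (hwu : hirzebruchForm a w u = 0)
    (hwv : hirzebruchForm a w v = 0) : w = 0 := by
  set D := u.1 * v.2 - u.2 * v.1
  have hD : D ≠ 0 := by
    have key :
        hirzebruchForm a u u * hirzebruchForm a v v - hirzebruchForm a u v ^ 2 = -D ^ 2 := by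
      simp only [hirzebruchForm_apply, D]; ring
    rw [hu, huv] at key
    rintro hD
    simp [hD] at key
  have h2 : w.2 * D = v.2 * hirzebruchForm a w u - u.2 * hirzebruchForm a w v := by
    simp only [hirzebruchForm_apply, D]; ring
  have h1 : w.1 * D =
      (u.1 + a * u.2) * hirzebruchForm a w v - (v.1 + a * v.2) * hirzebruchForm a w u := by
    simp only [hirzebruchForm_apply, D]; ring
  rw [hwu, hwv] at h1 h2
  exact Prod.ext (by simpa [hD] using h1) (by simpa [hD] using h2)

theorem hirzebruchForm_anticanonical_self :
    hirzebruchForm a (2 - a, 2) (2 - a, 2) = 8 := by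
  rw [hirzebruchForm_apply]; ring

theorem IsToricSystem.hirzebruchForm_self_mul_self_mul_self {κ : ℤ × ℤ} {A : ZMod 4 → ℤ × ℤ}
    (h : IsToricSystem (hirzebruchForm a) κ A) (i : ZMod 4) :
    hirzebruchForm a (A i) (A i) * hirzebruchForm a (A (i + 1)) (A (i + 1)) *
        hirzebruchForm a (A (i + 2)) (A (i + 2)) =
      hirzebruchForm a (A i) (A i) + hirzebruchForm a (A (i + 2)) (A (i + 2)) := by
  obtain ⟨h1, h2, -⟩ := (isToricSystem_iff_cyclic (hirzebruchForm_isSymm a)).1 h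
  have hsymm := (hirzebruchForm_isSymm a).eq
  have h12 : hirzebruchForm a (A (i + 1)) (A (i + 2)) = 1 := by
    rw [← h1 (i + 1), add_assoc, one_add_one_eq_two]
  have := hirzebruchForm_gram_det a ![A i, A (i + 1), A (i + 2)]
  simp only [Matrix.det_fin_three, Matrix.of_apply, Matrix.cons_val, Matrix.cons_val_zero,
    Matrix.cons_val_one] at this
  rw [hsymm (A (i + 1)) (A i), hsymm (A (i + 2)) (A i), hsymm (A (i + 2)) (A (i + 1)), h1 i, h12,
    h2 i] at this
  linear_combination this

theorem eq_or_exists_of_hirzebruchForm_self_eq_zero {F : ℤ × ℤ} (hF : hirzebruchForm a F F = 0)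
    (hK : hirzebruchForm a F (2 - a, 2) = 2) :
    F = (1, 0) ∨ ∃ b, a = 2 * b ∧ F = (-b, 1) := by
  obtain ⟨p, q⟩ := F
  simp only [hirzebruchForm_apply] at hF hK
  have hpq : q * (2 * p + a * q) = 0 := by linear_combination hF
  rcases mul_eq_zero.1 hpq with rfl | h
  · left
    have hp : p = 1 := by linarith
    rw [hp]
  · right
    have hq : q = 1 := by linarith
    subst hq
    exact ⟨-p, by linarith, by simp⟩

def IsStandardToricSystem (a : ℤ) (A : ZMod 4 → ℤ × ℤ) : Prop :=
  (∃ s : ℤ, ∀ j, A j = quadruple (1, 0) (s, 1) (1, 0) (-(a + s), 1) j) ∨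
    ∃ s b : ℤ, a = 2 * b ∧
      ∀ j, A j = quadruple (-b, 1) ((1, 0) + s • (-b, 1)) (-b, 1) ((1, 0) - s • (-b, 1)) j

theorem IsStandardToricSystem.isToricSystem {A : ZMod 4 → ℤ × ℤ}
    (h : IsStandardToricSystem a A) : IsToricSystem (hirzebruchForm a) (2 - a, 2) A := by
  rcases h with ⟨s, hA⟩ | ⟨s, b, rfl, hA⟩ <;>
  · rw [funext hA, isToricSystem_iff]
    simp only [quadruple_zero, quadruple_one, quadruple_two, quadruple_three, hirzebruchForm_apply,
      Prod.ext_iff, Prod.fst_add, Prod.snd_add, Prod.fst_sub, Prod.snd_sub, Prod.smul_fst,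
      Prod.smul_snd, smul_eq_mul]
    refine ⟨?_, ?_, ?_, ?_, ?_, ?_, ?_, ?_⟩ <;> ring

theorem IsToricSystem.isStandardToricSystem_of_self_eq_zero {A : ZMod 4 → ℤ × ℤ}
    (h : IsToricSystem (hirzebruchForm a) (2 - a, 2) A)
    (h0 : hirzebruchForm a (A 0) (A 0) = 0) :
    IsStandardToricSystem a A := by
  obtain ⟨h01, h12, -, h30, h02, -, hsum⟩ := isToricSystem_iff.1 h
  have hsymm := (hirzebruchForm_isSymm a).eq
  have h20 : A 2 = A 0 := by
    refine (sub_eq_zero.1 (hirzebruchForm_eq_zero_of_orthogonal h0 h01 ?_ ?_)).symm <;>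
      simp only [map_sub, LinearMap.sub_apply, hsymm (A 2), h0, h01, h02, h12, sub_self]
  have h3 : A 3 = (2 - a, 2) - A 0 - A 1 - A 0 := by rw [← hsum, h20]; abel
  have hK : hirzebruchForm a (A 0) (2 - a, 2) = 2 := by
    rw [← hsum, h20]
    simp only [map_add, h0, h01, hsymm (A 0) (A 3), h30]
    norm_num
  rcases eq_or_exists_of_hirzebruchForm_self_eq_zero h0 hK with hP | ⟨b, rfl, hF⟩
  · have h1 : A 1 = ((A 1).1, 1) := by
      rw [hP, hirzebruchForm_apply] at h01
      exact Prod.ext rfl (by simpa using h01)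
    refine Or.inl ⟨(A 1).1, ZMod.forall_four.2 ⟨hP, h1, h20.trans hP, ?_⟩⟩
    rw [quadruple_three, h3, hP, h1]
    ext <;> simp only [Prod.fst_sub, Prod.snd_sub] <;> ring
  · have h1 : A 1 = (1, 0) + (A 1).2 • (-b, 1) := by
      rw [hF, hirzebruchForm_apply] at h01
      ext <;> simp only [Prod.fst_add, Prod.snd_add, Prod.smul_fst, Prod.smul_snd, smul_eq_mul] <;>
        linarith
    refine Or.inr ⟨(A 1).2, b, rfl, ZMod.forall_four.2 ⟨hF, h1, h20.trans hF, ?_⟩⟩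
    rw [quadruple_three, h3, hF, h1]
    ext <;> simp only [Prod.fst_add, Prod.snd_add, Prod.fst_sub, Prod.snd_sub, Prod.smul_fst,
      Prod.smul_snd, smul_eq_mul] <;> ring

theorem IsToricSystem.exists_isStandardToricSystem_comp_dihedral {A : ZMod 4 → ℤ × ℤ}
    (h : IsToricSystem (hirzebruchForm a) (2 - a, 2) A) :
    ∃ (r : ZMod 4) (σ : Bool),
      IsStandardToricSystem a (fun j => A (r + if σ then j else -j)) := by
  have hB := hirzebruchForm_isSymm a
  have hs := h.sum_apply_self_eq hB
  rw [hirzebruchForm_anticanonical_self, sub_self] at hs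
  rcases Int.eq_zero_or_eq_zero_of_mul_mul_eq_add h.hirzebruchForm_self_mul_self_mul_self hs with
    h0 | h1
  · exact ⟨0, true, by simpa using h.isStandardToricSystem_of_self_eq_zero h0⟩
  · exact ⟨1, true,
      (h.comp_add_left hB 1).isStandardToricSystem_of_self_eq_zero (by simpa using h1)⟩

end Hirzebruch

theorem hirzebruch_toric_system_classification_general
    (a : ℤ)
    (form : (ℤ × ℤ) → (ℤ × ℤ) → ℤ)
    (hform : ∀ u v : ℤ × ℤ, form u v = u.1 * v.2 + u.2 * v.1 + a * u.2 * v.2)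
    (A : ZMod 4 → ℤ × ℤ) :
    ((∀ i : ZMod 4, form (A i) (A (i + 1)) = 1) ∧
      form (A 0) (A 2) = 0 ∧ form (A 1) (A 3) = 0 ∧
      A 0 + A 1 + A 2 + A 3 = (2 - a, 2)) ↔
    (∃ (r : ZMod 4) (σ : Bool),
      (∃ s : ℤ, ∀ j : ZMod 4,
        A (r + (if σ then j else -j)) =
          if j = 0 then ((1 : ℤ), (0 : ℤ))
          else if j = 1 then (s, 1)
          else if j = 2 then (1, 0)
          else (-(a + s), 1)) ∨
      (∃ s b : ℤ, a = 2 * b ∧ ∀ j : ZMod 4,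
        A (r + (if σ then j else -j)) =
          if j = 0 then (-b, (1 : ℤ))
          else if j = 1 then ((1, 0) + s • (-b, (1 : ℤ)))
          else if j = 2 then (-b, 1)
          else ((1, 0) - s • (-b, (1 : ℤ))))) := by
  obtain rfl : form = fun u v => hirzebruchForm a u v := funext₂ hform
  change IsToricSystem (hirzebruchForm a) (2 - a, 2) A ↔
    ∃ (r : ZMod 4) (σ : Bool), IsStandardToricSystem a fun j => A (r + if σ then j else -j)
  exact ⟨fun h => h.exists_isStandardToricSystem_comp_dihedral,
    fun ⟨r, σ, hA⟩ => hA.isToricSystem.of_comp_dihedral (hirzebruchForm_isSymm a)⟩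

/-- (Classification of toric systems on Hirzebruch surfaces.)
Model `Pic(𝔽_a) = ℤ × ℤ`, where `(p, q)` stands for `p·P + q·Q`, with intersection form
`⟨(p₁,q₁),(p₂,q₂)⟩ = p₁q₂ + p₂q₁ + a·q₁q₂` and anticanonical class `-K = (2-a, 2)`.
A quadruple `A : ZMod 4 → ℤ × ℤ` is a toric system iff, after a cyclic rotation of the
indices and possibly a reversal of their order, it equals
(i) `(P, sP + Q, P, -(a+s)P + Q)` for some `s ∈ ℤ`, or
(ii) `a` even and `(F, P + s·F, F, P - s·F)` with `F = -(a/2)P + Q`, for some `s ∈ ℤ`. -/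
theorem hirzebruch_toric_system_classification
    (a : ℤ) (ha : 0 ≤ a)
    (form : (ℤ × ℤ) → (ℤ × ℤ) → ℤ)
    (hform : ∀ u v : ℤ × ℤ, form u v = u.1 * v.2 + u.2 * v.1 + a * u.2 * v.2)
    (A : ZMod 4 → ℤ × ℤ) :
    ((∀ i : ZMod 4, form (A i) (A (i + 1)) = 1) ∧
      form (A 0) (A 2) = 0 ∧ form (A 1) (A 3) = 0 ∧
      A 0 + A 1 + A 2 + A 3 = (2 - a, 2)) ↔
    (∃ (r : ZMod 4) (σ : Bool),
      (∃ s : ℤ, ∀ j : ZMod 4,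
        A (r + (if σ then j else -j)) =
          if j = 0 then ((1 : ℤ), (0 : ℤ))
          else if j = 1 then (s, 1)
          else if j = 2 then (1, 0)
          else (-(a + s), 1)) ∨
      (∃ s b : ℤ, a = 2 * b ∧ ∀ j : ZMod 4,
        A (r + (if σ then j else -j)) =
          if j = 0 then (-b, (1 : ℤ))
          else if j = 1 then ((1, 0) + s • (-b, (1 : ℤ)))
          else if j = 2 then (-b, 1)
          else ((1, 0) - s • (-b, (1 : ℤ))))) :=
  hirzebruch_toric_system_classification_general a form hform A
end

section
/- Let l : ZMod n → ℤ² be toric fan data with self-intersection numbers a_i. (1) If n = 3, then a_1 = a_2 = a_3 = 1 and l_1 + l_2 + l_3 = 0 (the fan of ℙ²). (2) If n = 4, then there exists i ∈ ZMod 4 such that a_i = a_{i+2} = 0, a_{i+1} = −a_{i+3}, and l_{i+1} + l_{i+3} = 0 (the fan of the Hirzebruch surface 𝔽_{|a_{i+1}|}). -/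
/-!
Pairing the relation `l (i-1) + a i • l i + l (i+1) = 0` with `l (i+1)` under `det2` gives
`a i = det2 (l (i+1)) (l (i-1))`.  For `n = 3` the vectors `l (i+1), l (i-1)` are consecutive,
so `a i = 1`.  For `n = 4` antisymmetry of `det2` gives `a (i+2) = -a i`; subtracting the
relations at `i` and `i+2` then gives `a i • (l i + l (i+2)) = 0`, so `a i ≠ 0` forces
`l (i+2) = -l i` and hence `a (i+1) = 0`.  Any `i` with `a i = 0` is the required index.
-/

theorem det2_swap (u v : ℤ × ℤ) : det2 v u = -det2 u v := by
  unfold det2; ring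

theorem det2_neg_self (u : ℤ × ℤ) : det2 (-u) u = 0 := by
  unfold det2; simp only [Prod.fst_neg, Prod.snd_neg]; ring

theorem eq_det2_of_add_smul_add_eq_zero {u v w : ℤ × ℤ} {c : ℤ} (hvw : det2 v w = 1)
    (h : u + c • v + w = 0) : c = det2 w u := by
  obtain ⟨h₁, h₂⟩ := Prod.ext_iff.mp h
  simp only [Prod.fst_add, Prod.snd_add, Prod.smul_fst, Prod.smul_snd, smul_eq_mul,
    Prod.fst_zero, Prod.snd_zero] at h₁ h₂
  unfold det2 at *
  linear_combination w.2 * h₁ - w.1 * h₂ - c * hvw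

theorem ZMod.sub_one_eq_add_two (i : ZMod 3) : i - 1 = i + 2 := by
  revert i; decide

theorem ZMod.sub_one_eq_add_three (i : ZMod 4) : i - 1 = i + 3 := by
  revert i; decide

theorem selfIntersection_eq_det2 {n : ℕ} {l : ZMod n → ℤ × ℤ} {a : ZMod n → ℤ}
    (hdet : ∀ i, det2 (l i) (l (i + 1)) = 1)
    (ha : ∀ i, l (i - 1) + a i • l i + l (i + 1) = 0) (i : ZMod n) :
    a i = det2 (l (i + 1)) (l (i - 1)) :=
  eq_det2_of_add_smul_add_eq_zero (hdet i) (ha i)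

section Triangle

variable {l : ZMod 3 → ℤ × ℤ} {a : ZMod 3 → ℤ}

theorem selfIntersection_eq_one_of_three (hdet : ∀ i, det2 (l i) (l (i + 1)) = 1)
    (ha : ∀ i, l (i - 1) + a i • l i + l (i + 1) = 0) (i : ZMod 3) : a i = 1 := by
  rw [selfIntersection_eq_det2 hdet ha, ZMod.sub_one_eq_add_two, ← one_add_one_eq_two,
    ← add_assoc, hdet]

theorem sum_eq_zero_of_three (hdet : ∀ i, det2 (l i) (l (i + 1)) = 1)
    (ha : ∀ i, l (i - 1) + a i • l i + l (i + 1) = 0) : ∑ i : ZMod 3, l i = 0 := by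
  have h := ha 1
  rw [selfIntersection_eq_one_of_three hdet ha, one_smul] at h
  exact (Fin.sum_univ_three l).trans h

end Triangle

section Quadrilateral

variable {l : ZMod 4 → ℤ × ℤ} {a : ZMod 4 → ℤ}

theorem selfIntersection_add_two_of_four (hdet : ∀ i, det2 (l i) (l (i + 1)) = 1)
    (ha : ∀ i, l (i - 1) + a i • l i + l (i + 1) = 0) (i : ZMod 4) : a (i + 2) = -a i := by
  have h₁ : i + 2 + 1 = i - 1 := by rw [ZMod.sub_one_eq_add_three]; ring
  have h₂ : i + 2 - 1 = i + 1 := by ring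
  rw [selfIntersection_eq_det2 hdet ha, selfIntersection_eq_det2 hdet ha, h₁, h₂, det2_swap]

theorem add_add_two_eq_zero_of_four (hdet : ∀ i, det2 (l i) (l (i + 1)) = 1)
    (ha : ∀ i, l (i - 1) + a i • l i + l (i + 1) = 0) {i : ZMod 4} (hai : a i ≠ 0) :
    l i + l (i + 2) = 0 := by
  have h₁ : i + 2 + 1 = i - 1 := by rw [ZMod.sub_one_eq_add_three]; ring
  have h₂ : i + 2 - 1 = i + 1 := by ring
  have hi₂ := ha (i + 2)
  rw [h₁, h₂, selfIntersection_add_two_of_four hdet ha] at hi₂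
  have h : a i • (l i + l (i + 2)) = 0 := by
    linear_combination (norm := module) ha i - hi₂
  exact (smul_eq_zero.mp h).resolve_left hai

theorem selfIntersection_eq_zero_or_of_four (hdet : ∀ i, det2 (l i) (l (i + 1)) = 1)
    (ha : ∀ i, l (i - 1) + a i • l i + l (i + 1) = 0) (i : ZMod 4) :
    a i = 0 ∨ a (i + 1) = 0 := by
  refine or_iff_not_imp_left.mpr fun hai => ?_
  have hsum := add_add_two_eq_zero_of_four hdet ha hai
  have h₁ : i + 1 + 1 = i + 2 := by ring
  rw [selfIntersection_eq_det2 hdet ha, h₁, add_sub_cancel_right,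
    eq_neg_of_add_eq_zero_right hsum, det2_neg_self]

theorem exists_hirzebruch_of_four (hdet : ∀ i, det2 (l i) (l (i + 1)) = 1)
    (ha : ∀ i, l (i - 1) + a i • l i + l (i + 1) = 0) :
    ∃ i, a i = 0 ∧ a (i + 2) = 0 ∧ a (i + 1) = -a (i + 3) ∧ l (i + 1) + l (i + 3) = 0 := by
  obtain ⟨i, hai⟩ : ∃ i, a i = 0 :=
    (selfIntersection_eq_zero_or_of_four hdet ha 0).elim (⟨0, ·⟩) (⟨0 + 1, ·⟩)
  have h₁ : i + 1 + 2 = i + 3 := by ring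
  refine ⟨i, hai, by rw [selfIntersection_add_two_of_four hdet ha, hai, neg_zero], ?_, ?_⟩
  · rw [← h₁, selfIntersection_add_two_of_four hdet ha, neg_neg]
  · have h := ha i
    rwa [hai, zero_smul, add_zero, ZMod.sub_one_eq_add_three, add_comm] at h

end Quadrilateral

theorem toric_fan_data_minimal_models_general
    (n : ℕ) [NeZero n]
    (l : ZMod n → ℤ × ℤ) (hl : IsToricFanData n l)
    (a : ZMod n → ℤ)
    (ha : ∀ i : ZMod n, l (i - 1) + a i • l i + l (i + 1) = 0) :
    (n = 3 → (∀ i : ZMod n, a i = 1) ∧ ∑ i : ZMod n, l i = 0) ∧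
    (n = 4 → ∃ i : ZMod n, a i = 0 ∧ a (i + 2) = 0 ∧ a (i + 1) = -a (i + 3) ∧
      l (i + 1) + l (i + 3) = 0) := by
  obtain ⟨hdet, -⟩ := hl
  refine ⟨?_, ?_⟩
  · rintro rfl
    exact ⟨selfIntersection_eq_one_of_three hdet ha, sum_eq_zero_of_three hdet ha⟩
  · rintro rfl
    exact exists_hirzebruch_of_four hdet ha

/-- (The minimal toric surfaces.)  For toric fan data with
self-intersection numbers `a i`:
(1) if `n = 3` then all `a i = 1` and `∑ l i = 0` (the fan of `ℙ²`);
(2) if `n = 4` then there is `i` with `a i = a (i+2) = 0`, `a (i+1) = -a (i+3)` and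
`l (i+1) + l (i+3) = 0` (the fan of the Hirzebruch surface `𝔽_{|a (i+1)|}`). -/
theorem toric_fan_data_minimal_models
    (n : ℕ) (hn : 3 ≤ n) [NeZero n]
    (l : ZMod n → ℤ × ℤ) (hl : IsToricFanData n l)
    (a : ZMod n → ℤ)
    (ha : ∀ i : ZMod n, l (i - 1) + a i • l i + l (i + 1) = 0) :
    (n = 3 → (∀ i : ZMod n, a i = 1) ∧ ∑ i : ZMod n, l i = 0) ∧
    (n = 4 → ∃ i : ZMod n, a i = 0 ∧ a (i + 2) = 0 ∧ a (i + 1) = -a (i + 3) ∧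
      l (i + 1) + l (i + 3) = 0) :=
  toric_fan_data_minimal_models_general n l hl a ha
end
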